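/- Perturbation bound for pseudoinverses: if A, B ∈ ℝ^{m×n} both have full column rank, then ‖A† − B†‖ ≤ √2 ‖A†‖ ‖B†‖ ‖A − B‖, where † denotes Moore–Penrose pseudoinverse and ‖·‖ the spectral norm. -/

import Mathlib

open Matrix

/-- The spectral (operator 2-) norm of a real rectangular matrix. -/
noncomputable def matSpectralNorm {m n : ℕ} (A : Matrix (Fin m) (Fin n) ℝ) : ℝ :=
  ‖LinearMap.toContinuousLinearMap (Matrix.toEuclideanLin A)‖

/-- The Moore–Penrose pseudoinverse of a full column rank matrix. -/
noncomputable def pinv {m n : ℕ} (F : Matrix (Fin m) (Fin n) ℝ) :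
    Matrix (Fin n) (Fin m) ℝ :=
  (Fᵀ * F)⁻¹ * Fᵀ

/-!
Split the input space orthogonally into `range B` and its complement `ker Bᵀ`. On `range B`,
since `B†B = 1`, the difference `A† − B†` agrees with `−A†(A − B)B†`; on `ker Bᵀ`, where `B†`
vanishes, it agrees with `(AᵀA)⁻¹(A − B)ᵀ = A†A†ᵀ(A − B)ᵀ`. Pythagoras and Cauchy–Schwarz then give
`‖A† − B†‖ ≤ ‖A†‖ ‖A − B‖ √(‖B†‖² + ‖A†‖²)`, and since the claim is symmetric in `A` and `B` we may
assume `‖A†‖ ≤ ‖B†‖`, so that the square root is at most `√2 ‖B†‖`.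
-/

open scoped Matrix.Norms.L2Operator

section

variable {𝕜 E F : Type*} [RCLike 𝕜] [NormedAddCommGroup E] [InnerProductSpace 𝕜 E]
  [NormedAddCommGroup F] [InnerProductSpace 𝕜 F]

theorem ContinuousLinearMap.norm_le_sqrt_of_eqOn_orthogonal (K : Submodule 𝕜 E)
    [K.HasOrthogonalProjection] {U S T : E →L[𝕜] F} (hS : ∀ x ∈ K, U x = S x)
    (hT : ∀ x ∈ Kᗮ, U x = T x) :
    ‖U‖ ≤ √(‖S‖ ^ 2 + ‖T‖ ^ 2) := by
  refine U.opNorm_le_bound (Real.sqrt_nonneg _) fun x => ?_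
  set p := K.starProjection x
  have hpyth : ‖x‖ ^ 2 = ‖p‖ ^ 2 + ‖x - p‖ ^ 2 := by
    rw [K.norm_sq_eq_add_norm_sq_starProjection x, K.starProjection_orthogonal']
    rfl
  have hUx : U x = S p + T (x - p) := by
    rw [← hS p (K.starProjection_apply_mem x), ← hT _ (K.sub_starProjection_mem_orthogonal x),
      ← map_add, add_sub_cancel]
  calc ‖U x‖ ≤ ‖S‖ * ‖p‖ + ‖T‖ * ‖x - p‖ :=
        hUx ▸ norm_add_le_of_le (S.le_opNorm p) (T.le_opNorm _)
    _ ≤ √(‖S‖ ^ 2 + ‖T‖ ^ 2) * √(‖p‖ ^ 2 + ‖x - p‖ ^ 2) := by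
        simpa using Real.sum_mul_le_sqrt_mul_sqrt Finset.univ ![‖S‖, ‖T‖] ![‖p‖, ‖x - p‖]
    _ = √(‖S‖ ^ 2 + ‖T‖ ^ 2) * ‖x‖ := by rw [← hpyth, Real.sqrt_sq (norm_nonneg x)]

end

namespace Matrix

variable {𝕜 l m n : Type*} [RCLike 𝕜] [Fintype l] [DecidableEq l] [Fintype m] [DecidableEq m]
  [Fintype n]

theorem l2_opNorm_le_sqrt_of_mul_eq {U S T : Matrix n m 𝕜} (B : Matrix m l 𝕜) (C : Matrix n l 𝕜)
    (hS : U * B = S * B) (hT : U - T = C * Bᴴ) :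
    ‖U‖ ≤ √(‖S‖ ^ 2 + ‖T‖ ^ 2) := by
  refine ContinuousLinearMap.norm_le_sqrt_of_eqOn_orthogonal (LinearMap.range (toEuclideanLin B))
    (fun x hx => ?_) (fun x hx => ?_)
  · obtain ⟨y, rfl⟩ := hx
    change toEuclideanLin U _ = toEuclideanLin S _
    rw [← LinearMap.comp_apply, ← LinearMap.comp_apply, ← toLpLin_mul_same, ← toLpLin_mul_same,
      hS]
  · rw [LinearMap.orthogonal_range, ← toEuclideanLin_conjTranspose_eq_adjoint] at hx
    change toEuclideanLin U x = toEuclideanLin T x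
    rw [← sub_eq_zero, ← LinearMap.sub_apply, ← map_sub, hT, toLpLin_mul_same,
      LinearMap.comp_apply, hx, map_zero]

theorem l2_opNorm_transpose [DecidableEq n] (M : Matrix m n ℝ) : ‖Mᵀ‖ = ‖M‖ := by
  rw [← conjTranspose_eq_transpose_of_trivial, l2_opNorm_conjTranspose]

theorem isUnit_det_of_rank_eq_card {K : Type*} [Field K] {M : Matrix m m K}
    (h : M.rank = Fintype.card m) : IsUnit M.det := by
  rw [← isUnit_iff_isUnit_det, ← mulVec_surjective_iff_isUnit]
  refine LinearMap.range_eq_top.mp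
    (Submodule.eq_top_of_finrank_eq (S := LinearMap.range M.mulVecLin) ?_)
  rw [← Matrix.rank, h, Module.finrank_fintype_fun_eq_card]

end Matrix

section pinv

variable {m n : ℕ}

theorem isUnit_det_transpose_mul_self_of_rank_eq {A : Matrix (Fin m) (Fin n) ℝ} (hA : A.rank = n) :
    IsUnit (Aᵀ * A).det :=
  isUnit_det_of_rank_eq_card (by rw [rank_transpose_mul_self, hA, Fintype.card_fin])

theorem pinv_mul_self {A : Matrix (Fin m) (Fin n) ℝ} (hA : IsUnit (Aᵀ * A).det) :
    pinv A * A = 1 := by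
  rw [pinv, Matrix.mul_assoc, nonsing_inv_mul _ hA]

theorem pinv_mul_transpose_pinv {A : Matrix (Fin m) (Fin n) ℝ} (hA : IsUnit (Aᵀ * A).det) :
    pinv A * (pinv A)ᵀ = (Aᵀ * A)⁻¹ := by
  rw [pinv, transpose_mul, transpose_nonsing_inv, transpose_mul, transpose_transpose,
    Matrix.mul_assoc, ← Matrix.mul_assoc Aᵀ, mul_nonsing_inv _ hA, Matrix.mul_one]

theorem pinv_sub_pinv_sub_eq_mul_transpose (A B : Matrix (Fin m) (Fin n) ℝ) :
    pinv A - pinv B - (Aᵀ * A)⁻¹ * (A - B)ᵀ = ((Aᵀ * A)⁻¹ - (Bᵀ * B)⁻¹) * Bᵀ := by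
  simp only [pinv, transpose_sub, Matrix.mul_sub, Matrix.sub_mul]
  abel

theorem pinv_sub_pinv_mul_right_eq {A B : Matrix (Fin m) (Fin n) ℝ} (hA : IsUnit (Aᵀ * A).det)
    (hB : IsUnit (Bᵀ * B).det) :
    (pinv A - pinv B) * B = -(pinv A * (A - B) * pinv B) * B := by
  rw [Matrix.sub_mul, Matrix.neg_mul, Matrix.mul_assoc _ (pinv B), pinv_mul_self hB,
    Matrix.mul_one, Matrix.mul_sub, pinv_mul_self hA, neg_sub]

theorem norm_pinv_sub_pinv_le {A B : Matrix (Fin m) (Fin n) ℝ} (hA : IsUnit (Aᵀ * A).det)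
    (hB : IsUnit (Bᵀ * B).det) :
    ‖pinv A - pinv B‖ ≤ ‖pinv A‖ * ‖A - B‖ * √(‖pinv B‖ ^ 2 + ‖pinv A‖ ^ 2) := by
  have norm_range_part : ‖-(pinv A * (A - B) * pinv B)‖ ≤ ‖pinv A‖ * ‖A - B‖ * ‖pinv B‖ := by
    rw [norm_neg]
    exact (l2_opNorm_mul _ _).trans (by gcongr; exact l2_opNorm_mul _ _)
  have norm_ker_part : ‖(Aᵀ * A)⁻¹ * (A - B)ᵀ‖ ≤ ‖pinv A‖ * ‖A - B‖ * ‖pinv A‖ := by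
    calc ‖(Aᵀ * A)⁻¹ * (A - B)ᵀ‖
        ≤ ‖pinv A‖ * ‖(pinv A)ᵀ‖ * ‖(A - B)ᵀ‖ := by
          rw [← pinv_mul_transpose_pinv hA]
          exact (l2_opNorm_mul _ _).trans (by gcongr; exact l2_opNorm_mul _ _)
      _ = ‖pinv A‖ * ‖A - B‖ * ‖pinv A‖ := by
          rw [l2_opNorm_transpose, l2_opNorm_transpose]
          ring
  calc ‖pinv A - pinv B‖
      ≤ √(‖-(pinv A * (A - B) * pinv B)‖ ^ 2 + ‖(Aᵀ * A)⁻¹ * (A - B)ᵀ‖ ^ 2) :=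
        l2_opNorm_le_sqrt_of_mul_eq B _ (pinv_sub_pinv_mul_right_eq hA hB)
          (by rw [conjTranspose_eq_transpose_of_trivial]
              exact pinv_sub_pinv_sub_eq_mul_transpose A B)
    _ ≤ √((‖pinv A‖ * ‖A - B‖ * ‖pinv B‖) ^ 2 + (‖pinv A‖ * ‖A - B‖ * ‖pinv A‖) ^ 2) := by
        gcongr
    _ = ‖pinv A‖ * ‖A - B‖ * √(‖pinv B‖ ^ 2 + ‖pinv A‖ ^ 2) := by
        conv_rhs => rw [← Real.sqrt_sq (by positivity : 0 ≤ ‖pinv A‖ * ‖A - B‖),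
          ← Real.sqrt_mul (sq_nonneg _)]
        congr 1
        ring

end pinv

/-- Wedin-type perturbation bound for pseudoinverses of full column rank matrices:
`‖A† − B†‖ ≤ √2 ‖A†‖ ‖B†‖ ‖A − B‖`. -/
theorem stmt_15 {m n : ℕ} (A B : Matrix (Fin m) (Fin n) ℝ)
    (hA : A.rank = n) (hB : B.rank = n) :
    matSpectralNorm (pinv A - pinv B)
      ≤ Real.sqrt 2 * matSpectralNorm (pinv A) * matSpectralNorm (pinv B)
        * matSpectralNorm (A - B) := by
  -- `matSpectralNorm` is definitionally the norm of `Matrix.Norms.L2Operator`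
  change ‖pinv A - pinv B‖ ≤ √2 * ‖pinv A‖ * ‖pinv B‖ * ‖A - B‖
  wlog hab : ‖pinv A‖ ≤ ‖pinv B‖ generalizing A B
  · rw [norm_sub_rev, norm_sub_rev A]
    exact (this B A hB hA (le_of_not_ge hab)).trans_eq (by ring)
  have hsqrt : √(‖pinv B‖ ^ 2 + ‖pinv A‖ ^ 2) ≤ √2 * ‖pinv B‖ := by
    refine Real.sqrt_le_iff.mpr ⟨by positivity, ?_⟩
    rw [mul_pow, Real.sq_sqrt zero_le_two]
    nlinarith [norm_nonneg (pinv A)]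
  calc ‖pinv A - pinv B‖
      ≤ ‖pinv A‖ * ‖A - B‖ * √(‖pinv B‖ ^ 2 + ‖pinv A‖ ^ 2) :=
        norm_pinv_sub_pinv_le (isUnit_det_transpose_mul_self_of_rank_eq hA)
          (isUnit_det_transpose_mul_self_of_rank_eq hB)
    _ ≤ ‖pinv A‖ * ‖A - B‖ * (√2 * ‖pinv B‖) := by gcongr
    _ = √2 * ‖pinv A‖ * ‖pinv B‖ * ‖A - B‖ := by ring
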